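/- Let C_m be a cyclic subgroup of GL_n(ℝ) of order m, let 1 ≤ i and suppose 2^i divides m; let C_{2^{i-1}} and C_{2^i} denote the unique subgroups of C_m of orders 2^{i-1} and 2^i respectively. Define f_i := R_{C_m}( ∑_{j=1}^n ( R_{C_{2^{i-1}}}(X_j) − R_{C_{2^i}}(X_j) )² ) ∈ ℝ[X]^{C_m}. If x ∈ ℂⁿ \ ℝⁿ and σ ∈ C_m is an element of order exactly 2^i with σ·x = x̄ (the coordinatewise complex conjugate of x), then f_i(x) is real and f_i(x) < 0. -/

import Mathlib

open MvPolynomial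

/-- The action of `σ ∈ GL_n(ℝ)` on real polynomials, `(σ · p)(x) = p(σ⁻¹ x)`,
given by substituting `X i ↦ ∑ j (σ⁻¹)_{i j} X j`. -/
noncomputable def polyAct {n : ℕ} (σ : Matrix.GeneralLinearGroup (Fin n) ℝ) :
    MvPolynomial (Fin n) ℝ →ₐ[ℝ] MvPolynomial (Fin n) ℝ :=
  aeval fun i => ∑ j, (σ⁻¹).val i j • X j

/-- The subalgebra `ℝ[X]^G` of `G`-invariant polynomials. -/
noncomputable def invariants {n : ℕ} (G : Subgroup (Matrix.GeneralLinearGroup (Fin n) ℝ)) :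
    Subalgebra ℝ (MvPolynomial (Fin n) ℝ) where
  carrier := {p | ∀ σ ∈ G, polyAct σ p = p}
  mul_mem' := fun hp hq σ hσ => by rw [map_mul, hp σ hσ, hq σ hσ]
  one_mem' := fun σ _ => map_one (polyAct σ)
  add_mem' := fun hp hq σ hσ => by rw [map_add, hp σ hσ, hq σ hσ]
  zero_mem' := fun σ _ => map_zero (polyAct σ)
  algebraMap_mem' := fun r σ _ => (polyAct σ).commutes r

/-- The Reynolds operator `R_H(p) = (1/|H|) ∑_{σ ∈ H} σ · p` of a (finite) subgroup `H`. -/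
noncomputable def reynolds {n : ℕ} (H : Subgroup (Matrix.GeneralLinearGroup (Fin n) ℝ))
    (p : MvPolynomial (Fin n) ℝ) : MvPolynomial (Fin n) ℝ :=
  (Nat.card H : ℝ)⁻¹ • ∑ᶠ σ ∈ (H : Set (Matrix.GeneralLinearGroup (Fin n) ℝ)), polyAct σ p

/-- The action of `σ ∈ GL_n(ℝ)` on `ℂⁿ`, via the inclusion `GL_n(ℝ) ⊆ GL_n(ℂ)`. -/
noncomputable def mAct {n : ℕ} (σ : Matrix.GeneralLinearGroup (Fin n) ℝ) (x : Fin n → ℂ) :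
    Fin n → ℂ := fun i => ∑ j, (σ.val i j : ℂ) * x j

open Complex Subgroup

section Helpers

variable {n : ℕ}

lemma mAct_one (x : Fin n → ℂ) : mAct 1 x = x := by
  funext i
  simp [mAct, Matrix.one_apply, apply_ite, Finset.sum_ite_eq]

lemma mAct_mul (g h : Matrix.GeneralLinearGroup (Fin n) ℝ) (x : Fin n → ℂ) :
    mAct (g * h) x = mAct g (mAct h x) := by
  funext i
  simp only [mAct, Units.val_mul, Matrix.mul_apply, Finset.mul_sum]
  push_cast
  rw [Finset.sum_comm]
  simp [Finset.sum_mul, mul_assoc]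

lemma mAct_conj (g : Matrix.GeneralLinearGroup (Fin n) ℝ) (x : Fin n → ℂ) :
    mAct g (fun j => (starRingEnd ℂ) (x j)) = fun j => (starRingEnd ℂ) (mAct g x j) := by
  funext i
  simp [mAct, map_sum, Complex.conj_ofReal]

lemma mAct_inv_cancel (g : Matrix.GeneralLinearGroup (Fin n) ℝ) (x : Fin n → ℂ) :
    mAct g⁻¹ (mAct g x) = x := by
  rw [← mAct_mul, inv_mul_cancel, mAct_one]

lemma aeval_polyAct (g : Matrix.GeneralLinearGroup (Fin n) ℝ) (x : Fin n → ℂ)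
    (p : MvPolynomial (Fin n) ℝ) :
    aeval x (polyAct g p) = aeval (mAct g⁻¹ x) p := by
  rw [polyAct, comp_aeval_apply (φ := aeval x)]
  have h : (fun i => aeval x (∑ j, (g⁻¹).val i j • X j : MvPolynomial (Fin n) ℝ)) = mAct g⁻¹ x := by
    funext i
    simp [mAct, MvPolynomial.smul_eq_C_mul]
  rw [h]

lemma aeval_reynolds (H : Subgroup (Matrix.GeneralLinearGroup (Fin n) ℝ)) [Fintype H]
    (x : Fin n → ℂ) (p : MvPolynomial (Fin n) ℝ) :
    aeval x (reynolds H p)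
      = (Nat.card H : ℝ)⁻¹ • ∑ g : H, aeval (mAct (g : Matrix.GeneralLinearGroup (Fin n) ℝ)⁻¹ x) p := by
  rw [reynolds, map_smul, ← finsum_set_coe_eq_finsum_mem, finsum_eq_sum_of_fintype, map_sum]
  congr 1
  exact Finset.sum_congr rfl fun g _ => aeval_polyAct _ _ _

lemma sum_ite_even {M : Type*} [AddCommMonoid M] (N : ℕ) (a b : M) :
    ∑ k ∈ Finset.range (2 * N), (if Even k then a else b) = N • (a + b) := by
  induction N with
  | zero => simp
  | succ N ih =>
    rw [Nat.mul_succ, Finset.sum_range_succ, Finset.sum_range_succ, ih]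
    have h1 : Even (2 * N) := even_two_mul N
    have h2 : ¬ Even (2 * N + 1) := by simp [Nat.even_add_one, h1]
    rw [if_pos h1, if_neg h2, succ_nsmul]
    abel

lemma orderOf_sq {A : Type*} [Group A] {a : A} {i : ℕ} (hi : 1 ≤ i)
    (h : orderOf a = 2 ^ i) : orderOf (a ^ 2) = 2 ^ (i - 1) := by
  rw [orderOf_pow' a (by norm_num : (2:ℕ) ≠ 0), h]
  have h2 : Nat.gcd (2 ^ i) 2 = 2 := Nat.gcd_eq_right (dvd_pow_self 2 (by omega))
  rw [h2]
  rw [show i = (i-1) + 1 by omega, pow_succ]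
  simp

lemma zpowers_isCyclic {A : Type*} [Group A] (c : A) : IsCyclic (zpowers c) := by
  refine ⟨⟨⟨c, mem_zpowers c⟩, fun x => ?_⟩⟩
  obtain ⟨k, hk⟩ := mem_zpowers_iff.mp x.2
  exact ⟨k, Subtype.ext (by simpa using hk)⟩

lemma subgroup_eq_of_card_eq {A : Type*} [Group A] {c : A} [Finite (zpowers c)]
    {H K : Subgroup A} (hH : H ≤ zpowers c) (hK : K ≤ zpowers c)
    (hcard : Nat.card H = Nat.card K) : H = K := by
  classical
  have hcyc : IsCyclic (zpowers c) := zpowers_isCyclic c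
  have : Fintype (zpowers c) := Fintype.ofFinite _
  set d := Nat.card K with hd
  have hKfin : Finite K := Finite.Set.subset (zpowers c : Set A) hK
  have hd0 : 0 < d := Nat.card_pos
  have key : ∀ L : Subgroup A, L ≤ zpowers c → Nat.card L = d →
      (Finset.univ.filter (fun b : zpowers c => b ∈ L.subgroupOf (zpowers c)))
        = (Finset.univ.filter (fun b : zpowers c => b ^ d = 1)) := by
    intro L hL hLcard
    have hL' : Nat.card (L.subgroupOf (zpowers c)) = d := by
      rw [← hLcard]
      exact Nat.card_congr (subgroupOfEquivOfLe hL).toEquiv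
    apply Finset.eq_of_subset_of_card_le
    · intro b hb
      rw [Finset.mem_filter] at hb ⊢
      refine ⟨Finset.mem_univ _, ?_⟩
      have : (⟨b, hb.2⟩ : L.subgroupOf (zpowers c)) ^ d = 1 := by
        rw [← hL']; exact pow_card_eq_one'
      simpa using congrArg (Subtype.val) this
    · have h1 : (Finset.univ.filter (fun b : zpowers c => b ^ d = 1)).card ≤ d := by
        simpa using IsCyclic.card_pow_eq_one_le (α := zpowers c) hd0
      have h2 : (Finset.univ.filter (fun b : zpowers c => b ∈ L.subgroupOf (zpowers c))).card = d := by
        rw [← hL', ← Fintype.card_subtype, Nat.card_eq_fintype_card]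
      omega
  have hH' := key H hH (hcard.trans hd.symm)
  have hK' := key K hK hd.symm
  have : H.subgroupOf (zpowers c) = K.subgroupOf (zpowers c) := by
    ext b
    have h1 := Finset.ext_iff.mp (hH'.trans hK'.symm) b
    simpa [Finset.mem_filter] using h1
  have h2 := subgroupOf_inj.mp this
  rwa [inf_of_le_left hH, inf_of_le_left hK] at h2

lemma inner_eval {i : ℕ} (hi : 1 ≤ i) (σ : Matrix.GeneralLinearGroup (Fin n) ℝ)
    (hord : orderOf σ = 2 ^ i) (y : Fin n → ℂ)
    (hy : mAct σ y = fun j => (starRingEnd ℂ) (y j)) :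
    aeval y (∑ j, (reynolds (zpowers (σ ^ 2)) (X j) - reynolds (zpowers σ) (X j)) ^ 2)
      = ((- ∑ j, ((y j).im) ^ 2 : ℝ) : ℂ) := by
  have hfo : IsOfFinOrder σ := by
    rw [← orderOf_pos_iff, hord]; positivity
  have hfo2 : IsOfFinOrder (σ ^ 2) := hfo.pow
  have ft1 : Fintype (zpowers σ) := by
    have := hfo.finite_zpowers.to_subtype; exact Fintype.ofFinite _
  have ft2 : Fintype (zpowers (σ ^ 2)) := by
    have := hfo2.finite_zpowers.to_subtype; exact Fintype.ofFinite _
  -- the square of σ fixes y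
  have hs2 : mAct (σ ^ 2) y = y := by
    rw [sq, mAct_mul, hy, mAct_conj]
    funext j
    rw [congrFun hy j]
    simp
  have hfix : ∀ g ∈ zpowers (σ ^ 2), mAct g y = y := by
    let S : Subgroup (Matrix.GeneralLinearGroup (Fin n) ℝ) :=
      { carrier := {g | mAct g y = y}
        one_mem' := mAct_one y
        mul_mem' := by
          intro a b ha hb
          show mAct (a * b) y = y
          rw [mAct_mul]
          rw [show mAct b y = y from hb, show mAct a y = y from ha]
        inv_mem' := by
          intro a ha
          show mAct a⁻¹ y = y
          have h := mAct_inv_cancel a y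
          rwa [show mAct a y = y from ha] at h }
    exact fun g hg => Subgroup.zpowers_le.mpr (show σ ^ 2 ∈ S from hs2) hg
  have hpow : ∀ k : ℕ, mAct (σ ^ k) y
      = if Even k then y else fun j => (starRingEnd ℂ) (y j) := by
    intro k
    induction k with
    | zero => simp [mAct_one]
    | succ k ih =>
      rw [pow_succ, mAct_mul, hy, mAct_conj, ih]
      by_cases hk : Even k
      · rw [if_pos hk, if_neg (by simp [Nat.even_add_one, hk])]
      · rw [if_neg hk, if_pos (by simp [Nat.even_add_one, hk])]
        funext j; simp
  have hpowinv : ∀ k : ℕ, mAct (σ ^ k)⁻¹ y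
      = if Even k then y else fun j => (starRingEnd ℂ) (y j) := by
    intro k
    have h := mAct_inv_cancel (σ ^ k) y
    rw [hpow k] at h
    by_cases hk : Even k
    · rw [if_pos hk] at h; rw [if_pos hk, h]
    · rw [if_neg hk] at h
      rw [mAct_conj] at h
      rw [if_neg hk]
      funext j
      have h2 := congrFun h j
      simpa using congrArg (starRingEnd ℂ) h2
  have hc1 : Nat.card (zpowers (σ ^ 2)) = 2 ^ (i - 1) := by
    rw [Nat.card_zpowers, orderOf_sq hi hord]
  have hc2 : Nat.card (zpowers σ) = 2 ^ i := by rw [Nat.card_zpowers, hord]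
  -- per-coordinate value
  have hjval : ∀ j, aeval y (reynolds (zpowers (σ ^ 2)) (X j) - reynolds (zpowers σ) (X j))
      = ((y j).im : ℂ) * Complex.I := by
    intro j
    have ar1 := aeval_reynolds (zpowers (σ ^ 2)) y (X j : MvPolynomial (Fin n) ℝ)
    have ar2 := aeval_reynolds (zpowers σ) y (X j : MvPolynomial (Fin n) ℝ)
    rw [map_sub, ar1, ar2]
    have e1 : ∑ g : zpowers (σ ^ 2),
        aeval (mAct (g : Matrix.GeneralLinearGroup (Fin n) ℝ)⁻¹ y) (X j : MvPolynomial (Fin n) ℝ)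
        = (2 ^ (i - 1) : ℕ) • y j := by
      have : ∀ g : zpowers (σ ^ 2),
          aeval (mAct (g : Matrix.GeneralLinearGroup (Fin n) ℝ)⁻¹ y) (X j : MvPolynomial (Fin n) ℝ) = y j := by
        intro g
        rw [aeval_X, hfix _ (inv_mem g.2)]
      rw [Finset.sum_congr rfl fun g _ => this g, Finset.sum_const, Finset.card_univ,
        ← Nat.card_eq_fintype_card, hc1]
    have e2 : ∑ g : zpowers σ,
        aeval (mAct (g : Matrix.GeneralLinearGroup (Fin n) ℝ)⁻¹ y) (X j : MvPolynomial (Fin n) ℝ)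
        = (2 ^ (i - 1) : ℕ) • (y j + (starRingEnd ℂ) (y j)) := by
      have heq := Fintype.sum_equiv
        ((finEquivZPowers hfo).trans (Equiv.subtypeEquivRight fun x => Iff.rfl) :
          Fin (orderOf σ) ≃ zpowers σ)
        (fun k : Fin (orderOf σ) =>
          aeval (mAct (σ ^ (k : ℕ))⁻¹ y) (X j : MvPolynomial (Fin n) ℝ) : Fin (orderOf σ) → ℂ)
        (fun g : zpowers σ =>
          aeval (mAct (g : Matrix.GeneralLinearGroup (Fin n) ℝ)⁻¹ y) (X j : MvPolynomial (Fin n) ℝ))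
        (fun k => rfl)
      rw [← heq]
      have : ∀ k : Fin (orderOf σ), (aeval (mAct (σ ^ (k : ℕ))⁻¹ y) (X j : MvPolynomial (Fin n) ℝ) : ℂ)
          = if Even (k : ℕ) then y j else (starRingEnd ℂ) (y j) := by
        intro k
        rw [aeval_X, hpowinv]
        by_cases hk : Even (k : ℕ)
        · rw [if_pos hk, if_pos hk]
        · rw [if_neg hk, if_neg hk]
      rw [Finset.sum_congr rfl fun k _ => this k,
        Fin.sum_univ_eq_sum_range (fun k => if Even k then y j else (starRingEnd ℂ) (y j))
          (orderOf σ),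
        hord, show (2:ℕ) ^ i = 2 * 2 ^ (i - 1) from by
          rw [← pow_succ']; congr 1; omega,
        sum_ite_even]
    rw [e1, e2, hc1, hc2]
    have h2 : ((2:ℂ) ^ (i - 1)) ≠ 0 := pow_ne_zero _ two_ne_zero
    have key : ∀ z w : ℂ,
        (((2 ^ (i - 1) : ℕ) : ℝ))⁻¹ • ((2 ^ (i - 1) : ℕ) • z)
          - (((2 ^ i : ℕ) : ℝ))⁻¹ • ((2 ^ (i - 1) : ℕ) • w) = z - w / 2 := by
      intro z w
      rw [nsmul_eq_mul, nsmul_eq_mul, Complex.real_smul, Complex.real_smul]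
      push_cast
      rw [show i = (i - 1) + 1 from by omega, pow_succ]
      field_simp
      rw [Nat.add_sub_cancel]
      ring
    rw [key]
    have hzc := Complex.sub_conj (y j)
    push_cast at hzc
    linear_combination hzc / 2
  rw [map_sum]
  have : ∀ j, (aeval y ((reynolds (zpowers (σ ^ 2)) (X j) - reynolds (zpowers σ) (X j)) ^ 2) : ℂ)
      = -(((y j).im : ℂ) ^ 2) := by
    intro j
    rw [map_pow, hjval, mul_pow, Complex.I_sq]
    ring
  rw [Finset.sum_congr rfl fun j _ => this j]
  push_cast
  exact Finset.sum_neg_distrib _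

end Helpers

/-- let `C_m ⊆ GL_n(ℝ)` be cyclic of order `m`, `2^i ∣ m` with `i ≥ 1`,
and let `K₁, K₂` be the (unique) subgroups of orders `2^{i−1}` and `2^i`. Set
`fᵢ = R_{C_m}(∑ⱼ (R_{K₁}(Xⱼ) − R_{K₂}(Xⱼ))²)`. If `x ∈ ℂⁿ \ ℝⁿ` and `σ ∈ C_m` has order
exactly `2^i` with `σ·x = x̄`, then `fᵢ(x)` is real and `fᵢ(x) < 0`. -/
theorem statement_18 {n m i : ℕ}
    (G : Subgroup (Matrix.GeneralLinearGroup (Fin n) ℝ)) [Finite G]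
    (c : Matrix.GeneralLinearGroup (Fin n) ℝ) (hcyc : G = Subgroup.zpowers c)
    (hm : Nat.card G = m) (hi : 1 ≤ i) (hdvd : 2 ^ i ∣ m)
    (K₁ K₂ : Subgroup (Matrix.GeneralLinearGroup (Fin n) ℝ))
    (hK₁G : K₁ ≤ G) (hK₂G : K₂ ≤ G)
    (hK₁card : Nat.card K₁ = 2 ^ (i - 1)) (hK₂card : Nat.card K₂ = 2 ^ i)
    (f : MvPolynomial (Fin n) ℝ)
    (hfdef : f = reynolds G (∑ j, (reynolds K₁ (X j) - reynolds K₂ (X j)) ^ 2))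
    (x : Fin n → ℂ) (hx : ¬ ∀ j, (x j).im = 0)
    (σ : Matrix.GeneralLinearGroup (Fin n) ℝ) (hσ : σ ∈ G) (hord : orderOf σ = 2 ^ i)
    (hconj : mAct σ x = fun j => starRingEnd ℂ (x j)) :
    (aeval x f).im = 0 ∧ (aeval x f).re < 0 := by
  subst hcyc hfdef
  have hK2 : K₂ = zpowers σ := by
    refine subgroup_eq_of_card_eq hK₂G (zpowers_le.mpr hσ) ?_
    rw [hK₂card, Nat.card_zpowers, hord]
  have hK1 : K₁ = zpowers (σ ^ 2) := by
    refine subgroup_eq_of_card_eq hK₁G (zpowers_le.mpr (pow_mem hσ 2)) ?_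
    rw [hK₁card, Nat.card_zpowers, orderOf_sq hi hord]
  subst hK1 hK2
  have ftG : Fintype (zpowers c) := Fintype.ofFinite _
  set q : MvPolynomial (Fin n) ℝ :=
    ∑ j, (reynolds (zpowers (σ ^ 2)) (X j) - reynolds (zpowers σ) (X j)) ^ 2 with hq
  have hfeval := aeval_reynolds (zpowers c) x q
  set t : zpowers c → ℝ :=
    fun g => -(∑ j, ((mAct (g : Matrix.GeneralLinearGroup (Fin n) ℝ)⁻¹ x) j).im ^ 2) with ht
  have hterm : ∀ g : zpowers c,
      aeval (mAct (g : Matrix.GeneralLinearGroup (Fin n) ℝ)⁻¹ x) q = ((t g : ℝ) : ℂ) := by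
    intro g
    refine inner_eval hi σ hord _ ?_
    obtain ⟨a, ha⟩ := mem_zpowers_iff.mp hσ
    obtain ⟨b, hb⟩ := mem_zpowers_iff.mp g.2
    have hcomm : Commute σ ((g : Matrix.GeneralLinearGroup (Fin n) ℝ)⁻¹) := by
      rw [← ha, ← hb]
      exact ((Commute.refl c).zpow_zpow a b).inv_right
    rw [← mAct_mul, hcomm.eq, mAct_mul, hconj, mAct_conj]
  have hsum : ∑ g : zpowers c,
      aeval (mAct (g : Matrix.GeneralLinearGroup (Fin n) ℝ)⁻¹ x) q
      = ((∑ g : zpowers c, t g : ℝ) : ℂ) := by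
    rw [Finset.sum_congr rfl fun g _ => hterm g]
    push_cast
    rfl
  rw [hfeval, hsum, Complex.real_smul, ← Complex.ofReal_mul]
  constructor
  · simp
  · rw [Complex.ofReal_re]
    have hmpos : (0:ℝ) < (Nat.card (zpowers c) : ℝ) := by
      exact_mod_cast Nat.card_pos
    apply mul_neg_of_pos_of_neg (inv_pos.mpr hmpos)
    have hone : t 1 < 0 := by
      have h1 : mAct ((1 : zpowers c) : Matrix.GeneralLinearGroup (Fin n) ℝ)⁻¹ x = x := by
        rw [show ((1 : zpowers c) : Matrix.GeneralLinearGroup (Fin n) ℝ) = 1 from rfl,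
          inv_one, mAct_one]
      push_neg at hx
      obtain ⟨j0, hj0⟩ := hx
      have hpos : 0 < ∑ j, (x j).im ^ 2 :=
        Finset.sum_pos' (fun j _ => sq_nonneg _)
          ⟨j0, Finset.mem_univ _,
            (sq_nonneg _).lt_of_ne (Ne.symm (pow_ne_zero 2 hj0))⟩
      rw [ht]
      simp only [h1]
      linarith
    have hrest : ∑ g ∈ Finset.univ.erase (1 : zpowers c), t g ≤ 0 :=
      Finset.sum_nonpos fun g _ => neg_nonpos.mpr (Finset.sum_nonneg fun j _ => sq_nonneg _)
    have hsplit := Finset.add_sum_erase Finset.univ t (Finset.mem_univ (1 : zpowers c))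
    rw [← hsplit]
    linarith
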